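/- For γ > 1, γ ≠ 2, with γ* = γ/(γ-1) and δ_a(γ) = a(γ-2)+1, the Leray symbol function J(d,γ,k) = Γ((2k+1+d)/γ) Γ(2k+2 - (2k+1+d)/γ) / Γ(k+1)^2 · (γ/2)^{2k+2} (γ-1)^{-(2k+2-(2k+1+d)/γ)} satisfies the Hölder symmetry J(δ_a(γ), γ, k) = J(δ_a(γ*), γ*, k) for every a ∈ ℝ and every nonnegative integer k. -/

import Mathlib

/-- The Leray symbol function on `M_γ`. -/
noncomputable def J (d γ : ℝ) (k : ℕ) : ℝ :=
  Real.Gamma ((2 * k + 1 + d) / γ) * Real.Gamma (2 * k + 2 - (2 * k + 1 + d) / γ) /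
      Real.Gamma (k + 1) ^ 2 *
    (γ / 2) ^ (2 * k + 2) * (γ - 1) ^ (-(2 * (k : ℝ) + 2 - (2 * k + 1 + d) / γ))

/-- `δ_a(γ) = a(γ-2)+1`. -/
def delta (a γ : ℝ) : ℝ := a * (γ - 2) + 1

theorem J_Holder_symmetric (γ : ℝ) (hγ : 1 < γ) (hγ2 : γ ≠ 2) (a : ℝ) (k : ℕ) :
    J (delta a γ) γ k = J (delta a (γ / (γ - 1))) (γ / (γ - 1)) k := by
  have h1 : (0:ℝ) < γ - 1 := by linarith
  have hne : γ - 1 ≠ 0 := ne_of_gt h1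
  have hγ0 : γ ≠ 0 := by linarith
  set s : ℝ := (2 * (k:ℝ) + 1 + delta a γ) / γ with hs
  have key : (2 * (k:ℝ) + 1 + delta a (γ / (γ - 1))) / (γ / (γ - 1)) = 2 * (k:ℝ) + 2 - s := by
    rw [hs]; simp only [delta]; field_simp; ring
  have hstar : γ / (γ - 1) - 1 = (γ - 1)⁻¹ := by field_simp; ring
  have hsub : (2 * (k:ℝ) + 2) - (2 * (k:ℝ) + 2 - s) = s := by ring
  have hpow : (γ - 1) ^ (-(2 * (k:ℝ) + 2 - s)) =
      ((γ - 1)⁻¹) ^ (2 * k + 2) * (γ - 1) ^ s := by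
    rw [← Real.rpow_natCast ((γ - 1)⁻¹) (2 * k + 2), Real.inv_rpow h1.le,
      ← Real.rpow_neg h1.le, ← Real.rpow_add h1]
    congr 1
    push_cast
    ring
  unfold J
  have hinv : ((γ - 1)⁻¹ : ℝ) ^ (-s) = (γ - 1) ^ s := by
    rw [Real.inv_rpow h1.le, ← Real.rpow_neg h1.le, neg_neg]
  rw [key, hsub, hstar, hpow, hinv,
    show γ / (γ - 1) / 2 = γ / 2 * (γ - 1)⁻¹ from by ring, mul_pow]
  ring
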